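/- Let k ≥ 3, v_1, ..., v_k > 0 with Σ v_i = 1 and v_i ≤ 1/3 for all i, and assume v_1 = max_i v_i. Define ψ : [0, 1/(4v_1)] → ℝ by ψ(μ) := Σ_{i=1}^k (1/2)(1 - √(1 - 4μ v_i)). Then there exists a unique μ* ∈ (0, 1/(4v_1)) with ψ(μ*) = 1. -/

import Mathlib

/-!
ψ is a sum of continuous, strictly increasing functions of μ, so it is enough to see that
ψ(0) = 0 < 1 < ψ(1/(4v₁)) and apply the intermediate value theorem. At μ = 1/(4v₁) the term
of v₁ vanishes and, by √(1 - x) < 1 - x/2, the remaining square roots add up to less than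
(k - 1) - (1 - v₁)/(2v₁) ≤ k - 2, where the last step is v₁ ≤ 1/3.
-/

open Finset Set

theorem StrictMonoOn.existsUnique_mem_Ioo_eq {α δ : Type*} [ConditionallyCompleteLinearOrder α]
    [TopologicalSpace α] [OrderTopology α] [DenselyOrdered α] [LinearOrder δ]
    [TopologicalSpace δ] [OrderClosedTopology δ] {f : α → δ} {a b : α} {y : δ} (hab : a ≤ b)
    (hf : StrictMonoOn f (Icc a b)) (hcont : ContinuousOn f (Icc a b))
    (hy : y ∈ Ioo (f a) (f b)) : ∃! x, x ∈ Ioo a b ∧ f x = y := by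
  obtain ⟨x, hx, hfx⟩ := intermediate_value_Ioo hab hcont hy
  exact ⟨x, ⟨hx, hfx⟩, fun x' ⟨hx', hfx'⟩ =>
    hf.injOn (Ioo_subset_Icc_self hx') (Ioo_subset_Icc_self hx) (hfx'.trans hfx.symm)⟩

theorem Real.sqrt_one_sub_lt {x : ℝ} (hx : x ≠ 0) (hx2 : x < 2) : √(1 - x) < 1 - x / 2 := by
  rw [Real.sqrt_lt' (by linarith)]
  nlinarith [sq_pos_of_ne_zero hx]

section Psi

variable {ι : Type*} [Fintype ι]

noncomputable def psi (v : ι → ℝ) (μ : ℝ) : ℝ :=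
  ∑ i, (1 / 2) * (1 - √(1 - 4 * μ * v i))

theorem continuous_psi (v : ι → ℝ) : Continuous (psi v) :=
  continuous_finsetSum _ fun _ _ => by fun_prop

@[simp]
theorem psi_zero (v : ι → ℝ) : psi v 0 = 0 := by
  simp [psi]

theorem psi_eq (v : ι → ℝ) (μ : ℝ) :
    psi v μ = (Fintype.card ι - ∑ i, √(1 - 4 * μ * v i)) / 2 := by
  rw [psi, ← Finset.mul_sum, Finset.sum_sub_distrib]
  simp only [sum_const, card_univ, nsmul_eq_mul, mul_one]
  ring

theorem strictMonoOn_psi {v : ι → ℝ} {i₀ : ι} (hpos : ∀ i, 0 < v i)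
    (hmax : ∀ i, v i ≤ v i₀) : StrictMonoOn (psi v) (Icc 0 (1 / (4 * v i₀))) := by
  intro x hx y hy hxy
  refine Finset.sum_lt_sum_of_nonempty ⟨i₀, mem_univ _⟩ fun i _ => ?_
  have hvi := hpos i
  have hy' : y * (4 * v i₀) ≤ 1 := (le_div_iff₀ (by linarith [hpos i₀])).mp hy.2
  have hroot : √(1 - 4 * y * v i) < √(1 - 4 * x * v i) :=
    Real.sqrt_lt_sqrt (by nlinarith [hmax i, hx.1]) (by nlinarith)
  linarith

variable [DecidableEq ι]

theorem sum_sqrt_one_sub_div_lt {v : ι → ℝ} {i₀ : ι} (hpos : ∀ i, 0 < v i)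
    (hsum : ∑ i, v i = 1) (hmax : ∀ i, v i ≤ v i₀) (hv₀ : v i₀ ≤ 1 / 3) :
    ∑ i, √(1 - v i / v i₀) < Fintype.card ι - 2 := by
  have hv₀pos := hpos i₀
  set s := univ.erase i₀
  have hsum_s : ∑ i ∈ s, v i = 1 - v i₀ := by
    rw [← hsum, ← add_sum_erase _ _ (mem_univ i₀)]
    ring
  have hs : s.Nonempty := nonempty_of_sum_ne_zero (by rw [hsum_s]; linarith)
  have hcard : (s.card : ℝ) + 1 = Fintype.card ι := by
    exact_mod_cast card_erase_add_one (mem_univ i₀)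
  have hratio : 1 ≤ (1 - v i₀) / (2 * v i₀) := by
    rw [le_div_iff₀ (by linarith)]
    linarith
  calc ∑ i, √(1 - v i / v i₀) = ∑ i ∈ s, √(1 - v i / v i₀) := by
        rw [← add_sum_erase _ _ (mem_univ i₀), div_self hv₀pos.ne', sub_self, Real.sqrt_zero,
          zero_add]
    _ < ∑ i ∈ s, (1 - v i / v i₀ / 2) :=
        sum_lt_sum_of_nonempty hs fun i _ => Real.sqrt_one_sub_lt
          (div_pos (hpos i) hv₀pos).ne' (by linarith [(div_le_one hv₀pos).mpr (hmax i)])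
    _ = s.card - (1 - v i₀) / (2 * v i₀) := by
        rw [sum_sub_distrib, ← sum_div, ← sum_div, hsum_s]
        simp only [sum_const, nsmul_eq_mul, mul_one]
        ring
    _ ≤ Fintype.card ι - 2 := by linarith

theorem one_lt_psi {v : ι → ℝ} {i₀ : ι} (hpos : ∀ i, 0 < v i) (hsum : ∑ i, v i = 1)
    (hmax : ∀ i, v i ≤ v i₀) (hv₀ : v i₀ ≤ 1 / 3) : 1 < psi v (1 / (4 * v i₀)) := by
  have hv₀pos := hpos i₀
  have hkey := sum_sqrt_one_sub_div_lt hpos hsum hmax hv₀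
  have hterm : ∀ i, 4 * (1 / (4 * v i₀)) * v i = v i / v i₀ := fun i => by
    field_simp
  simp only [psi_eq, hterm]
  linarith

end Psi

theorem stmt_12 (k : ℕ) (hk : 3 ≤ k) (v : Fin k → ℝ)
    (hpos : ∀ i, 0 < v i)
    (hsum : ∑ i, v i = 1)
    (hbd : ∀ i, v i ≤ 1/3)
    (hmax : ∀ i, v i ≤ v ⟨0, by omega⟩) :
    ∃! μ : ℝ, μ ∈ Set.Ioo (0 : ℝ) (1 / (4 * v ⟨0, by omega⟩)) ∧
      ∑ i, (1/2) * (1 - Real.sqrt (1 - 4 * μ * v i)) = 1 := by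
  have hv₀ := hpos ⟨0, by omega⟩
  refine StrictMonoOn.existsUnique_mem_Ioo_eq (f := psi v) (by positivity)
    (strictMonoOn_psi hpos hmax) (continuous_psi v).continuousOn ?_
  rw [psi_zero]
  exact ⟨one_pos, one_lt_psi hpos hsum hmax (hbd _)⟩
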